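/- Let G be a finite simple graph of class two with β(G) ≥ 2. Then the girth of G is at most 4. -/

import Mathlib

open Finset

/-- `C` is a vertex cover of `G`: every edge has an endpoint in `C`. -/
def IsCover {V : Type*} (G : SimpleGraph V) (C : Finset V) : Prop :=
  ∀ ⦃u v : V⦄, G.Adj u v → u ∈ C ∨ v ∈ C

/-- `A` is an independent set of `G`: no two of its vertices are adjacent. -/
def IsIndep {V : Type*} (G : SimpleGraph V) (A : Finset V) : Prop :=
  ∀ ⦃u : V⦄, u ∈ A → ∀ ⦃v : V⦄, v ∈ A → ¬ G.Adj u v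

/-- The vertex cover number β(G): the minimum size of a vertex cover of `G`. -/
noncomputable def coverNumber {V : Type*} [Fintype V] (G : SimpleGraph V) : ℕ :=
  sInf {n : ℕ | ∃ C : Finset V, IsCover G C ∧ C.card = n}

/-- `G` admits a feasible schedule for a boat of capacity `b`, in the sense of the
structure theorem of Csorba, Hurkens and Woeginger. -/
def Feasible {V : Type*} [Fintype V] [DecidableEq V] (G : SimpleGraph V) (b : ℕ) : Prop :=
  ∃ X₁ X₂ X₃ Y₁ Y₂ : Finset V,
    Disjoint X₁ X₂ ∧ Disjoint X₁ X₃ ∧ Disjoint X₂ X₃ ∧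
    IsIndep G (X₁ ∪ X₂ ∪ X₃) ∧
    Y₁.Nonempty ∧ Y₂.Nonempty ∧
    Y₁ ⊆ univ \ (X₁ ∪ X₂ ∪ X₃) ∧ Y₂ ⊆ univ \ (X₁ ∪ X₂ ∪ X₃) ∧
    (univ \ (X₁ ∪ X₂ ∪ X₃)).card ≤ b ∧
    IsIndep G (X₁ ∪ Y₁) ∧ IsIndep G (X₂ ∪ Y₂) ∧
    X₃.card ≤ Y₁.card + Y₂.card

/-- `G` is of class one if it has a feasible schedule for boat capacity β(G). -/
def ClassOne {V : Type*} [Fintype V] [DecidableEq V] (G : SimpleGraph V) : Prop :=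
  Feasible G (coverNumber G)

/-- `G` is of class two if it is not of class one. -/
def ClassTwo {V : Type*} [Fintype V] [DecidableEq V] (G : SimpleGraph V) : Prop :=
  ¬ ClassOne G

/-!
Take a minimum vertex cover `C` and two distinct vertices `y, y' ∈ C`, and put `Y₁ = {y}`,
`Y₂ = {y'}`. The complement `X` of `C` is independent; split it into the non-neighbours of `y`
(`X₁`), the neighbours of `y` that are not neighbours of `y'` (`X₂`) and the common neighbours of
`y` and `y'` (`X₃`). This is a feasible schedule for capacity `|C| = β(G)` as soon as `|X₃| ≤ 2`,
and two distinct common neighbours of `y, y'` already close a 4-cycle.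
-/

namespace SimpleGraph

variable {V : Type*} (G : SimpleGraph V)

lemma girth_le_four_of_adj {y y' z z' : V} (hy : y ≠ y') (hz : z ≠ z')
    (hyz : G.Adj y z) (hy'z : G.Adj y' z) (hyz' : G.Adj y z') (hy'z' : G.Adj y' z') :
    G.girth ≤ 4 := by
  let w : G.Walk y y := .cons hyz (.cons hy'z.symm (.cons hy'z' (.cons hyz'.symm .nil)))
  have hw : w.IsCycle := by
    simp [w, Walk.isCycle_def, hyz.ne, hyz'.ne, hy'z'.ne, hyz.ne', hyz'.ne', hy'z.ne', hy,
      hy.symm, hz, Sym2.eq]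
  exact G.girth_le_length hw

lemma card_filter_adj_adj_le_one (hG : 4 < G.girth) {y y' : V} (hy : y ≠ y') (s : Finset V)
    [DecidablePred fun x => G.Adj y x ∧ G.Adj y' x] :
    (s.filter fun x => G.Adj y x ∧ G.Adj y' x).card ≤ 1 := by
  refine card_le_one.mpr fun z hz z' hz' => ?_
  by_contra hzz'
  obtain ⟨-, hyz, hy'z⟩ := mem_filter.mp hz
  obtain ⟨-, hyz', hy'z'⟩ := mem_filter.mp hz'
  exact hG.not_ge (G.girth_le_four_of_adj hy hzz' hyz hy'z hyz' hy'z')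

end SimpleGraph

section Schedule

variable {V : Type*} {G : SimpleGraph V}

lemma exists_isCover_card_eq_coverNumber [Fintype V] (G : SimpleGraph V) :
    ∃ C : Finset V, IsCover G C ∧ C.card = coverNumber G :=
  Nat.sInf_mem (s := {n | ∃ C : Finset V, IsCover G C ∧ C.card = n})
    ⟨_, univ, fun u _ _ => Or.inl (mem_univ u), rfl⟩

lemma IsCover.isIndep_compl [Fintype V] [DecidableEq V] {C : Finset V} (hC : IsCover G C) :
    IsIndep G (univ \ C) := fun _ hu _ hv huv =>
  (hC huv).elim (mem_sdiff.mp hu).2 (mem_sdiff.mp hv).2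

lemma IsIndep.mono {A B : Finset V} (hB : IsIndep G B) (hAB : A ⊆ B) : IsIndep G A :=
  fun _ hu _ hv => hB (hAB hu) (hAB hv)

lemma isIndep_union_singleton [DecidableEq V] {A : Finset V} {y : V} :
    IsIndep G (A ∪ {y}) ↔ IsIndep G A ∧ ∀ a ∈ A, ¬ G.Adj y a := by
  refine ⟨fun h => ⟨h.mono subset_union_left, fun a ha => h (by simp) (by simp [ha])⟩,
    fun ⟨hA, hy⟩ u hu v hv huv => ?_⟩
  simp only [mem_union, mem_singleton] at hu hv
  rcases hu with hu | rfl <;> rcases hv with hv | rfl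
  exacts [hA hu hv huv, hy u hu huv.symm, hy v hv huv, G.irrefl huv]

lemma feasible_of_isCover [Fintype V] [DecidableEq V] [DecidableRel G.Adj] {C : Finset V}
    {b : ℕ} (hC : IsCover G C) (hCb : C.card ≤ b) {y y' : V} (hy : y ∈ C) (hy' : y' ∈ C)
    (hcommon : ((univ \ C).filter fun x => G.Adj y x ∧ G.Adj y' x).card ≤ 2) :
    Feasible G b := by
  set X := univ \ C
  have hX : X.filter (fun x => ¬ G.Adj y x) ∪ X.filter (fun x => G.Adj y x ∧ ¬ G.Adj y' x)
      ∪ X.filter (fun x => G.Adj y x ∧ G.Adj y' x) = X := by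
    ext; simp only [mem_union, mem_filter]; tauto
  have hXC : univ \ X = C := Finset.sdiff_sdiff_eq_self (subset_univ C)
  refine ⟨X.filter (fun x => ¬ G.Adj y x), X.filter (fun x => G.Adj y x ∧ ¬ G.Adj y' x),
    X.filter (fun x => G.Adj y x ∧ G.Adj y' x), {y}, {y'},
    ?_, ?_, ?_, ?_, by simp, by simp, ?_, ?_, ?_, ?_, ?_, ?_⟩
  all_goals simp only [hX, hXC, isIndep_union_singleton, singleton_subset_iff,
    card_singleton, disjoint_filter, mem_filter]
  · tauto
  · tauto
  · tauto
  · exact hC.isIndep_compl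
  · exact hy
  · exact hy'
  · exact hCb
  · exact ⟨hC.isIndep_compl.mono (filter_subset _ _), fun a ha => ha.2⟩
  · exact ⟨hC.isIndep_compl.mono (filter_subset _ _), fun a ha => ha.2.2⟩
  · exact hcommon

end Schedule

/-- A class-two graph with vertex cover number at least 2 has girth at most 4. -/
theorem girth_le_four_of_classTwo {V : Type*} [Fintype V] [DecidableEq V]
    (G : SimpleGraph V) (h2 : ClassTwo G) (hβ : 2 ≤ coverNumber G) :
    G.girth ≤ 4 := by
  classical
  obtain ⟨C, hC, hCcard⟩ := exists_isCover_card_eq_coverNumber G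
  obtain ⟨y, hy, y', hy', hyy'⟩ := one_lt_card.mp (show 1 < C.card by omega)
  by_contra! hG
  exact h2 <| feasible_of_isCover hC hCcard.le hy hy' <|
    (G.card_filter_adj_adj_le_one hG hyy' _).trans one_le_two
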